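/- arXiv:2006.06566 — 9 statements merged into one kernel-verified Lean document; each statement's English description precedes it below -/
import Mathlib

section
/- Let $u^L \in \mathbb{R}^{m \times n}$ be a leader payoff matrix, extended bilinearly to mixed strategies, and let $M = \max_{\mathbf{y} \in \Delta^{m-1}} \min_{\ell \in [n]} u^L(\mathbf{y},\ell)$ be the leader's maximin utility. Fix $\mathbf{x} \in \Delta^{m-1}$ and $j \in [n]$, and let $U_j(\mathbf{x}) = \{\mathbf{y} \in \Delta^{m-1} : u^L(\mathbf{y},j) > u^L(\mathbf{x},j)\}$ with closure $\overline{U_j(\mathbf{x})}$. Then $u^L(\mathbf{x},j) \geq M$ if and only if $u^L(\mathbf{x},j) \geq \max_{\mathbf{y} \in \overline{U_j(\mathbf{x})}} \min_{\ell \in [n] \setminus \{j\}} u^L(\mathbf{y},\ell)$ (with the convention $\max \emptyset = -\infty$, requiring $n \geq 2$). -/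
open Finset

noncomputable section

def simplex (m : ℕ) : Set (Fin m → ℝ) := stdSimplex ℝ (Fin m)

def util {m n : ℕ} (u : Fin m → Fin n → ℝ) (y : Fin m → ℝ) (j : Fin n) : ℝ :=
  ∑ i, y i * u i j

/-!
Both sides say that no leader strategy beats `util uL x j` against every follower reply. If `y`
beats it against `j`, then `y ∈ U_j(x)`, so the right-hand side supplies a reply `ℓ ≠ j` that
does not. Conversely, the set of strategies answered by some `ℓ ≠ j` at most `util uL x j` is a
finite union of closed half-spaces; the left-hand side puts `U_j(x)` inside it, hence also its
closure.
-/

theorem continuous_util {m n : ℕ} (u : Fin m → Fin n → ℝ) (j : Fin n) :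
    Continuous fun y => util u y j := by
  unfold util
  fun_prop

theorem isClosed_setOf_exists_le {X ι : Type*} [TopologicalSpace X] [Finite ι]
    (p : ι → Prop) {f : ι → X → ℝ} (hf : ∀ i, Continuous (f i)) (c : ℝ) :
    IsClosed {z | ∃ i, p i ∧ f i z ≤ c} := by
  rw [Set.ofPred_exists]
  exact isClosed_iUnion_of_finite fun i =>
    isClosed_const.inter (isClosed_le (hf i) continuous_const)

theorem stmt_0_general (m n : ℕ)
    (uL : Fin m → Fin n → ℝ) (x : Fin m → ℝ) (j : Fin n) :
    (∀ y ∈ simplex m, ∃ ℓ, util uL y ℓ ≤ util uL x j) ↔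
    (∀ y ∈ closure {z | z ∈ simplex m ∧ util uL x j < util uL z j},
      ∃ ℓ, ℓ ≠ j ∧ util uL y ℓ ≤ util uL x j) := by
  constructor
  · intro h
    have hU : {z | z ∈ simplex m ∧ util uL x j < util uL z j} ⊆
        {z | ∃ ℓ, ℓ ≠ j ∧ util uL z ℓ ≤ util uL x j} := by
      rintro z ⟨hz, hbeat⟩
      obtain ⟨ℓ, hℓ⟩ := h z hz
      exact ⟨ℓ, by rintro rfl; exact hℓ.not_gt hbeat, hℓ⟩
    exact fun y hy => closure_minimal hU
      (isClosed_setOf_exists_le (· ≠ j) (continuous_util uL) _) hy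
  · intro h y hy
    by_cases hbeat : util uL x j < util uL y j
    · obtain ⟨ℓ, -, hℓ⟩ := h y (subset_closure ⟨hy, hbeat⟩)
      exact ⟨ℓ, hℓ⟩
    · exact ⟨j, not_lt.mp hbeat⟩

/-- Lemma 1 (M–V): $u^L(x,j) \ge M$ iff $u^L(x,j) \ge \max_{y \in \overline{U_j(x)}} \min_{\ell \ne j} u^L(y,\ell)$. -/
theorem stmt_0 (m n : ℕ) (hm : 1 ≤ m) (hn : 2 ≤ n)
    (uL : Fin m → Fin n → ℝ) (x : Fin m → ℝ) (hx : x ∈ simplex m) (j : Fin n) :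
    (∀ y ∈ simplex m, ∃ ℓ, util uL y ℓ ≤ util uL x j) ↔
    (∀ y ∈ closure {z | z ∈ simplex m ∧ util uL x j < util uL z j},
      ∃ ℓ, ℓ ≠ j ∧ util uL y ℓ ≤ util uL x j) :=
  stmt_0_general m n uL x j
end
end

section
/- Let $u^L \in \mathbb{R}^{m \times n}$ with maximin utility $M$, and suppose $(\mathbf{x},j)$ satisfies $u^L(\mathbf{x},j) \geq M$. Define $\widetilde{BR}(\mathbf{y}) = \{j\}$ if $\mathbf{y} = \mathbf{x}$, and $\widetilde{BR}(\mathbf{y}) = \arg\min_{\ell \in [n]} u^L(\mathbf{y},\ell)$ otherwise. Then $(\mathbf{x},j)$ is an SSE of the game $(u^L, \widetilde{BR})$. -/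
open Finset

noncomputable section

theorem stmt_2_general (m n : ℕ) (uL : Fin m → Fin n → ℝ)
    (x : Fin m → ℝ) (j : Fin n)
    (hM : ∀ y ∈ simplex m, ∃ ℓ, util uL y ℓ ≤ util uL x j)
    (BR : (Fin m → ℝ) → Set (Fin n))
    (hBRx : BR x = {j})
    (hBRy : ∀ y, y ≠ x → BR y = {ℓ | ∀ k, util uL y ℓ ≤ util uL y k}) :
    j ∈ BR x ∧ ∀ y ∈ simplex m, ∀ ℓ ∈ BR y, util uL y ℓ ≤ util uL x j := by
  refine ⟨hBRx ▸ rfl, fun y hy ℓ hℓ => ?_⟩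
  by_cases hyx : y = x
  · subst hyx
    rw [hBRx, Set.mem_singleton_iff] at hℓ
    rw [hℓ]
  · rw [hBRy y hyx] at hℓ
    obtain ⟨ℓ', hℓ'⟩ := hM y hy
    exact (hℓ ℓ').trans hℓ'

/-- If $u^L(x,j) \ge M$, the threatening correspondence induces $(x,j)$ as an SSE. -/
theorem stmt_2 (m n : ℕ) (uL : Fin m → Fin n → ℝ)
    (x : Fin m → ℝ) (hx : x ∈ simplex m) (j : Fin n)
    (hM : ∀ y ∈ simplex m, ∃ ℓ, util uL y ℓ ≤ util uL x j)
    (BR : (Fin m → ℝ) → Set (Fin n))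
    (hBRx : BR x = {j})
    (hBRy : ∀ y, y ≠ x → BR y = {ℓ | ∀ k, util uL y ℓ ≤ util uL y k}) :
    j ∈ BR x ∧ ∀ y ∈ simplex m, ∀ ℓ ∈ BR y, util uL y ℓ ≤ util uL x j :=
  stmt_2_general m n uL x j hM BR hBRx hBRy
end
end

section
/- (Example: no payoff matrix realizes the polytopal correspondence.) Let $u^L = \begin{pmatrix} 0 & 1 & 1 \\ 1 & -1/2 & 1/2 \\ 1 & 1/2 & -1/2 \end{pmatrix}$, and define regions $R_1 = \{\mathbf{y} \in \Delta^2 : y_1 \geq y_2 + y_3\}$, $R_2 = \{\mathbf{y} \in \Delta^2 : y_1 \leq y_2+y_3, y_2 \geq y_3\}$, $R_3 = \{\mathbf{y} \in \Delta^2 : y_1 \leq y_2+y_3, y_2 \leq y_3\}$. There is no matrix $\tilde{u}^F \in \mathbb{R}^{3 \times 3}$ such that for all $\mathbf{y} \in \Delta^2$ and $\ell \in \{1,2,3\}$: $\ell \in \arg\max_{k} \tilde{u}^F(\mathbf{y},k)$ if and only if $\mathbf{y} \in R_\ell$. -/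
open Finset

noncomputable section

/-!
Payoffs are linear in the mixed strategy, so two actions that tie at `q` and at the midpoint
of `p` and `q` also tie at `p`. Actions 1 and 3 (indices `0` and `2`) must tie at
`q = (1/2, 0, 1/2)` and at `(1/2, 1/4, 1/4)`, which lie in `R₁ ∩ R₃`; the latter is the
midpoint of `q` and `p = (1/2, 1/2, 0)`. But `p ∈ R₁ \ R₃`, so action 1 is strictly better
than action 3 at `p`.
-/

section Util

variable {m n : ℕ} (u : Fin m → Fin n → ℝ)

theorem util_add (y z : Fin m → ℝ) (j : Fin n) :
    util u (y + z) j = util u y j + util u z j := by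
  simp only [util, Pi.add_apply, add_mul, sum_add_distrib]

theorem util_smul (c : ℝ) (y : Fin m → ℝ) (j : Fin n) :
    util u (c • y) j = c * util u y j := by
  simp only [util, Pi.smul_apply, smul_eq_mul, mul_sum, mul_assoc]

theorem util_eq_of_eq_of_eq_midpoint {p q : Fin m → ℝ} {j k : Fin n}
    (hq : util u q j = util u q k)
    (hmid : util u ((1 / 2 : ℝ) • (p + q)) j = util u ((1 / 2 : ℝ) • (p + q)) k) :
    util u p j = util u p k := by
  simp only [util_smul, util_add] at hmid
  linarith

end Util

theorem mem_simplex_three {a b c : ℝ} (ha : 0 ≤ a) (hb : 0 ≤ b) (hc : 0 ≤ c)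
    (hsum : a + b + c = 1) : ![a, b, c] ∈ simplex 3 :=
  ⟨fun i => by fin_cases i <;> assumption, by simpa [Fin.sum_univ_three] using hsum⟩

/-- Example: no payoff matrix realizes the polytopal best response correspondence
given by the regions $R_1, R_2, R_3$. -/
theorem stmt_6 :
    ¬ ∃ v : Fin 3 → Fin 3 → ℝ, ∀ y ∈ simplex 3, ∀ ℓ : Fin 3,
      ((∀ k, util v y k ≤ util v y ℓ) ↔ y ∈
        (![{z : Fin 3 → ℝ | z 1 + z 2 ≤ z 0},
           {z : Fin 3 → ℝ | z 0 ≤ z 1 + z 2 ∧ z 2 ≤ z 1},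
           {z : Fin 3 → ℝ | z 0 ≤ z 1 + z 2 ∧ z 1 ≤ z 2}] : Fin 3 → Set (Fin 3 → ℝ)) ℓ) := by
  rintro ⟨v, hv⟩
  have tie {y : Fin 3 → ℝ} (hy : y ∈ simplex 3) (h1 : y 1 + y 2 ≤ y 0)
      (h3 : y 0 ≤ y 1 + y 2 ∧ y 1 ≤ y 2) : util v y 0 = util v y 2 :=
    le_antisymm ((hv y hy 2).mpr h3 0) ((hv y hy 0).mpr h1 2)
  set p : Fin 3 → ℝ := ![1 / 2, 1 / 2, 0]
  set q : Fin 3 → ℝ := ![1 / 2, 0, 1 / 2]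
  set s : Fin 3 → ℝ := ![1 / 2, 1 / 4, 1 / 4]
  have hp : p ∈ simplex 3 := mem_simplex_three (by norm_num) (by norm_num) le_rfl (by norm_num)
  have hq : q ∈ simplex 3 := mem_simplex_three (by norm_num) le_rfl (by norm_num) (by norm_num)
  have hs : s ∈ simplex 3 :=
    mem_simplex_three (by norm_num) (by norm_num) (by norm_num) (by norm_num)
  have s_eq_midpoint : s = (1 / 2 : ℝ) • (p + q) := by
    ext i; fin_cases i <;> norm_num [p, q, s]
  have tie_q : util v q 0 = util v q 2 :=
    tie hq (by norm_num [q, Matrix.cons_val_two]) (by norm_num [q, Matrix.cons_val_two])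
  have tie_s : util v s 0 = util v s 2 :=
    tie hs (by norm_num [s, Matrix.cons_val_two]) (by norm_num [s, Matrix.cons_val_two])
  have tie_p : util v p 0 = util v p 2 :=
    util_eq_of_eq_of_eq_midpoint v tie_q (s_eq_midpoint ▸ tie_s)
  have p_best : ∀ k, util v p k ≤ util v p 0 :=
    (hv p hp 0).mpr (by norm_num [p, Matrix.cons_val_two])
  have p_not_R3 : ¬ (p 0 ≤ p 1 + p 2 ∧ p 1 ≤ p 2) := by norm_num [p, Matrix.cons_val_two]
  exact p_not_R3 ((hv p hp 2).mp fun k => tie_p ▸ p_best k)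
end
end

section
/- Fix $(\mathbf{x},j)$, a set $\widehat{S} \subseteq [n] \setminus \{j\}$, $k \in \arg\min_{\ell \in \widehat{S}} u^L(\mathbf{x},\ell)$, and $\alpha > 0$. Define $\tilde{u}^F(\mathbf{y},\ell) = -u^L(\mathbf{y},\ell)$ for $\ell \in \widehat{S}$, $\tilde{u}^F(\mathbf{y},\ell) = -u^L(\mathbf{y},k) - 1$ for $\ell \in [n] \setminus (\widehat{S} \cup \{j\})$, and $\tilde{u}^F(\mathbf{y},j) = -u^L(\mathbf{y},k) + \alpha(u^L(\mathbf{x},j) - u^L(\mathbf{y},j))$. Then: (i) $j \in \widetilde{BR}(\mathbf{x})$; (ii) $\widetilde{BR}(\mathbf{y}) \subseteq \widehat{S} \cup \{j\}$ for all $\mathbf{y} \in \Delta^{m-1}$; (iii) if $j \in \widetilde{BR}(\mathbf{y})$ then $u^L(\mathbf{y},j) \leq u^L(\mathbf{x},j)$; (iv) if $\ell \in \widetilde{BR}(\mathbf{y}) \cap \widehat{S}$ then $u^L(\mathbf{y},\ell) = \min_{\ell' \in \widehat{S}} u^L(\mathbf{y},\ell')$. Here $\widetilde{BR}(\mathbf{y})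 = \arg\max_{\ell \in [n]} \tilde{u}^F(\mathbf{y},\ell)$. -/
open Finset

noncomputable section

/-!
At a fixed `y`, the fake follower payoff `ũ^F(y, ·)` only depends on the leader's payoffs
`a = u^L(y, ·)` and on the bonus `c = α (u^L(x, j) - u^L(y, j))` of action `j`. Since `k ∈ Ŝ`,
every action outside `Ŝ ∪ {j}` is strictly worse than `k`, and `j` is at least as good as `k`
exactly when `c ≥ 0`. At `y = x` the bonus vanishes and `k` minimises `a` on `Ŝ`, so `j` is a
best response; in general, as `α > 0`, the bonus is nonnegative iff `u^L(y, j) ≤ u^L(x, j)`.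
-/

section FakePayoff

variable {ι : Type*} [DecidableEq ι] {S : Finset ι} {j k ℓ : ι} {c : ℝ} {a : ι → ℝ}

def fakePayoff (S : Finset ι) (j k : ι) (c : ℝ) (a : ι → ℝ) (ℓ : ι) : ℝ :=
  if ℓ ∈ S then -a ℓ else if ℓ = j then -a k + c else -a k - 1

theorem fakePayoff_of_mem (h : ℓ ∈ S) : fakePayoff S j k c a ℓ = -a ℓ := if_pos h

theorem fakePayoff_self (hjS : j ∉ S) : fakePayoff S j k c a j = -a k + c := by
  simp [fakePayoff, hjS]

theorem fakePayoff_of_not_mem (hℓS : ℓ ∉ S) (hℓj : ℓ ≠ j) :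
    fakePayoff S j k c a ℓ = -a k - 1 := by
  simp [fakePayoff, hℓS, hℓj]

theorem fakePayoff_le_self (hjS : j ∉ S) (hc : 0 ≤ c) (hk : ∀ ℓ ∈ S, a k ≤ a ℓ) (ℓ : ι) :
    fakePayoff S j k c a ℓ ≤ fakePayoff S j k c a j := by
  rw [fakePayoff_self hjS]
  by_cases hℓS : ℓ ∈ S
  · rw [fakePayoff_of_mem hℓS]
    linarith [hk ℓ hℓS]
  · by_cases hℓj : ℓ = j
    · rw [hℓj, fakePayoff_self hjS]
    · rw [fakePayoff_of_not_mem hℓS hℓj]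
      linarith

theorem mem_or_eq_of_forall_fakePayoff_le (hkS : k ∈ S)
    (hmax : ∀ k', fakePayoff S j k c a k' ≤ fakePayoff S j k c a ℓ) : ℓ ∈ S ∨ ℓ = j := by
  by_contra! hℓ
  have hkℓ := hmax k
  rw [fakePayoff_of_mem hkS, fakePayoff_of_not_mem hℓ.1 hℓ.2] at hkℓ
  linarith

theorem nonneg_of_forall_fakePayoff_le (hjS : j ∉ S) (hkS : k ∈ S)
    (hmax : ∀ k', fakePayoff S j k c a k' ≤ fakePayoff S j k c a j) : 0 ≤ c := by
  have hkj := hmax k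
  rw [fakePayoff_of_mem hkS, fakePayoff_self hjS] at hkj
  linarith

theorem le_of_forall_fakePayoff_le (hℓS : ℓ ∈ S)
    (hmax : ∀ k', fakePayoff S j k c a k' ≤ fakePayoff S j k c a ℓ) :
    ∀ ℓ' ∈ S, a ℓ ≤ a ℓ' := by
  intro ℓ' hℓ'S
  have h := hmax ℓ'
  rw [fakePayoff_of_mem hℓ'S, fakePayoff_of_mem hℓS] at h
  linarith

end FakePayoff

theorem stmt_7_general (m n : ℕ) (uL : Fin m → Fin n → ℝ)
    (x : Fin m → ℝ) (j : Fin n)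
    (S : Finset (Fin n)) (hjS : j ∉ S)
    (k : Fin n) (hkS : k ∈ S) (hk : ∀ ℓ ∈ S, util uL x k ≤ util uL x ℓ)
    (α : ℝ) (hα : 0 < α)
    (v : (Fin m → ℝ) → Fin n → ℝ)
    (hv : ∀ y ℓ, v y ℓ =
      if ℓ ∈ S then -util uL y ℓ
      else if ℓ = j then -util uL y k + α * (util uL x j - util uL y j)
      else -util uL y k - 1) :
    (∀ ℓ, v x ℓ ≤ v x j) ∧
    (∀ y ∈ simplex m, ∀ ℓ, (∀ k', v y k' ≤ v y ℓ) → ℓ ∈ S ∨ ℓ = j) ∧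
    (∀ y ∈ simplex m, (∀ k', v y k' ≤ v y j) → util uL y j ≤ util uL x j) ∧
    (∀ y ∈ simplex m, ∀ ℓ ∈ S, (∀ k', v y k' ≤ v y ℓ) →
      ∀ ℓ' ∈ S, util uL y ℓ ≤ util uL y ℓ') := by
  have hv' : ∀ y, v y = fakePayoff S j k (α * (util uL x j - util uL y j)) (util uL y) :=
    fun y ↦ funext (hv y)
  refine ⟨?_, fun y _ ℓ ↦ ?_, fun y _ ↦ ?_, fun y _ ℓ hℓS ↦ ?_⟩ <;> rw [hv']
  · exact fakePayoff_le_self hjS (by simp) hk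
  · exact mem_or_eq_of_forall_fakePayoff_le hkS
  · exact fun hmax ↦ sub_nonneg.mp <|
      nonneg_of_mul_nonneg_right (nonneg_of_forall_fakePayoff_le hjS hkS hmax) hα
  · exact le_of_forall_fakePayoff_le hℓS

/-- Properties (i)–(iv) of the constructed fake payoff function. -/
theorem stmt_7 (m n : ℕ) (uL : Fin m → Fin n → ℝ)
    (x : Fin m → ℝ) (hx : x ∈ simplex m) (j : Fin n)
    (S : Finset (Fin n)) (hS : S.Nonempty) (hjS : j ∉ S)
    (k : Fin n) (hkS : k ∈ S) (hk : ∀ ℓ ∈ S, util uL x k ≤ util uL x ℓ)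
    (α : ℝ) (hα : 0 < α)
    (v : (Fin m → ℝ) → Fin n → ℝ)
    (hv : ∀ y ℓ, v y ℓ =
      if ℓ ∈ S then -util uL y ℓ
      else if ℓ = j then -util uL y k + α * (util uL x j - util uL y j)
      else -util uL y k - 1) :
    (∀ ℓ, v x ℓ ≤ v x j) ∧
    (∀ y ∈ simplex m, ∀ ℓ, (∀ k', v y k' ≤ v y ℓ) → ℓ ∈ S ∨ ℓ = j) ∧
    (∀ y ∈ simplex m, (∀ k', v y k' ≤ v y j) → util uL y j ≤ util uL x j) ∧
    (∀ y ∈ simplex m, ∀ ℓ ∈ S, (∀ k', v y k' ≤ v y ℓ) →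
      ∀ ℓ' ∈ S, util uL y ℓ ≤ util uL y ℓ') :=
  stmt_7_general m n uL x j S hjS k hkS hk α hα v hv
end
end

section
/- In the setting where $u^L(\mathbf{x},j) < M_{-j}$, $u^L(\mathbf{x},j) \geq V$, $U_j(\mathbf{x}) \neq \emptyset$: writing $u^L(\mathbf{y},\ell) = \mathbf{g}_\ell \cdot (\mathbf{y}-\mathbf{y}^*) + u^L(\mathbf{y}^*,\ell)$ in coordinates $(y_1,\dots,y_{m-1})$, with $B = \{i \in [m] : \mathbf{e}_i \cdot \mathbf{y}^* = \beta_i\}$ the tight simplex boundary constraints at $\mathbf{y}^*$ and $S = \{\ell \neq j : u^L(\mathbf{y}^*,\ell) = V\}$, the vector $-\mathbf{g}_j$ lies in the conic hull of $\{\mathbf{g}_\ell : \ell \in S\} \cup \{\mathbf{e}_i : i \in B\}$; i.e., $-\mathbf{g}_j = \sum_{\ell \in S} \lambda_\ell \mathbf{g}_\ell + \sum_{i \in B} \mu_i \mathbf{e}_i$ with all $\lambda_\ell, \mu_i \geq 0$. -/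
/-!
By Farkas' lemma (proved here by Fourier–Motzkin elimination), either `-g j` is a nonnegative
combination of the `g ℓ` (`ℓ ∈ S`) and the tight constraint vectors `bvec d i` (`i ∈ B`), or there
is a direction `z` with `g ℓ ⬝ᵥ z ≥ 0` for `ℓ ∈ S`, `bvec d i ⬝ᵥ z ≥ 0` for `i ∈ B` and
`g j ⬝ᵥ z > 0`. In the second case only the tight constraints could stop a step from `y*` along `z`,
so `y* + t • z` stays in the simplex for small `t > 0`; it improves `j` while no `ℓ ∈ S` drops
below `V`, contradicting the key input.
-/

open Finset

noncomputable section

/-- The simplex in \$(m-1)\$-coordinates: \$y \ge 0\$ componentwise and \$\sum_i y_i \le 1\$. -/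
def simplexCoord (d : ℕ) : Set (Fin d → ℝ) := {y | (∀ i, 0 ≤ y i) ∧ ∑ i, y i ≤ 1}

/-- The vectors of the \$m\$ boundary constraints \$e_i \cdot y \ge \beta_i\$ of the simplex. -/
def bvec (d : ℕ) (i : Fin (d + 1)) : Fin d → ℝ :=
  if h : (i : ℕ) < d then Pi.single ⟨i, h⟩ 1 else fun _ => -1

/-- The constants of the boundary constraints. -/
def bconst (d : ℕ) (i : Fin (d + 1)) : ℝ := if (i : ℕ) < d then 0 else -1

/-- Inner product on \$\mathbb{R}^{d}\$. -/
def dotp {d : ℕ} (a b : Fin d → ℝ) : ℝ := ∑ i, a i * b i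

open Matrix Filter Topology

section Projection

variable {𝕜 ι : Type*} [Field 𝕜] [Fintype ι]

/-- Projection along `a` onto the hyperplane `z ⬝ᵥ · = 0` (when `a ⬝ᵥ z ≠ 0`). -/
def projAlong (a z : ι → 𝕜) : (ι → 𝕜) →ₗ[𝕜] ι → 𝕜 where
  toFun v := v - (v ⬝ᵥ z / a ⬝ᵥ z) • a
  map_add' u v := by simp only [add_dotProduct, add_div, add_smul]; abel
  map_smul' c v := by simp [smul_sub, smul_smul, mul_div_assoc]

lemma projAlong_apply (a z v : ι → 𝕜) : projAlong a z v = v - (v ⬝ᵥ z / a ⬝ᵥ z) • a := rfl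

lemma projAlong_dotProduct (a z v w : ι → 𝕜) :
    projAlong a z v ⬝ᵥ w = v ⬝ᵥ projAlong z a w := by
  simp only [projAlong_apply, sub_dotProduct, dotProduct_sub, smul_dotProduct, dotProduct_smul,
    smul_eq_mul, dotProduct_comm z a, dotProduct_comm w a]
  ring

lemma projAlong_self {a z : ι → 𝕜} (h : a ⬝ᵥ z ≠ 0) : projAlong a z a = 0 := by
  simp [projAlong_apply, h]

lemma eq_smul_of_projAlong_eq_zero {a z v : ι → 𝕜} (h : projAlong a z v = 0) :
    v = (v ⬝ᵥ z / a ⬝ᵥ z) • a :=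
  sub_eq_zero.1 h

end Projection

section Farkas

variable {𝕜 ι α : Type*} [Field 𝕜] [LinearOrder 𝕜] [IsStrictOrderedRing 𝕜] [Fintype ι]
  [Fintype α] [DecidableEq α]

lemma exists_nonneg_sum_smul_of_projAlong {T : Finset α} {x₀ : α} {a : α → ι → 𝕜}
    {b z : ι → 𝕜} {lam : α → 𝕜} (hx₀z : a x₀ ⬝ᵥ z < 0) (hz : ∀ x ∈ T, 0 ≤ a x ⬝ᵥ z)
    (hbz : b ⬝ᵥ z < 0) (hlam : 0 ≤ lam) (hsupp : ∀ x ∉ T, lam x = 0)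
    (hb : projAlong (a x₀) z b = ∑ x, lam x • projAlong (a x₀) z (a x)) :
    ∃ lam' : α → 𝕜, 0 ≤ lam' ∧ (∀ x ∉ insert x₀ T, lam' x = 0) ∧ b = ∑ x, lam' x • a x := by
  set r := b - ∑ x, lam x • a x
  have hr : r = (r ⬝ᵥ z / a x₀ ⬝ᵥ z) • a x₀ := eq_smul_of_projAlong_eq_zero <| by
    simp [r, hb, map_sum]
  have hrz : r ⬝ᵥ z < 0 := by
    have : 0 ≤ ∑ x, lam x * (a x ⬝ᵥ z) := Finset.sum_nonneg fun x _ => by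
      by_cases hx : x ∈ T
      · exact mul_nonneg (hlam x) (hz x hx)
      · simp [hsupp x hx]
    simp only [r, sub_dotProduct, sum_dotProduct, smul_dotProduct, smul_eq_mul]
    linarith
  refine ⟨lam + Pi.single x₀ (r ⬝ᵥ z / a x₀ ⬝ᵥ z), ?_, fun x hx => ?_, ?_⟩
  · exact add_nonneg hlam (Pi.single_nonneg.2 (div_nonneg_of_nonpos hrz.le hx₀z.le))
  · simp only [Finset.mem_insert, not_or] at hx
    simp [hsupp x hx.2, hx.1]
  · simp only [Pi.add_apply, add_smul, Finset.sum_add_distrib, Pi.single_apply, ite_smul,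
      zero_smul, Finset.sum_ite_eq', Finset.mem_univ, if_true, ← hr, r]
    abel

theorem farkas_alternative (T : Finset α) (a : α → ι → 𝕜) (b : ι → 𝕜) :
    (∃ lam : α → 𝕜, 0 ≤ lam ∧ (∀ x ∉ T, lam x = 0) ∧ b = ∑ x, lam x • a x) ∨
      ∃ z, (∀ x ∈ T, 0 ≤ a x ⬝ᵥ z) ∧ b ⬝ᵥ z < 0 := by
  induction T using Finset.induction_on generalizing a b with
  | empty =>
    by_cases hb : b = 0
    · exact .inl ⟨0, le_rfl, fun _ _ => rfl, by simp [hb]⟩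
    · refine .inr ⟨-b, by simp, ?_⟩
      have hbb : 0 ≤ b ⬝ᵥ b := Finset.sum_nonneg fun i _ => mul_self_nonneg (b i)
      simpa using hbb.lt_of_ne' (dotProduct_self_eq_zero.not.2 hb)
  | @insert x₀ T hx₀ ih =>
    rcases ih a b with ⟨lam, hlam, hsupp, hb⟩ | ⟨z, hz, hbz⟩
    · exact .inl ⟨lam, hlam, fun x hx => hsupp x (by simp_all), hb⟩
    obtain hx₀z | hx₀z := le_or_gt 0 (a x₀ ⬝ᵥ z)
    · exact .inr ⟨z, by simpa [hx₀z] using hz, hbz⟩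
    -- Fourier–Motzkin elimination of `a x₀`: recurse on `T` after projecting onto `z ⬝ᵥ · = 0`.
    rcases ih (projAlong (a x₀) z ∘ a) (projAlong (a x₀) z b) with
      ⟨lam, hlam, hsupp, hb⟩ | ⟨w, hw, hbw⟩
    · exact .inl (exists_nonneg_sum_smul_of_projAlong hx₀z hz hbz hlam hsupp hb)
    · refine .inr ⟨projAlong z (a x₀) w, fun x hx => ?_, ?_⟩
      · rcases Finset.mem_insert.1 hx with rfl | hx
        · simp [← projAlong_dotProduct, projAlong_self hx₀z.ne]
        · simpa [← projAlong_dotProduct] using hw x hx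
      · simpa [← projAlong_dotProduct] using hbw

end Farkas

lemma dotp_eq_dotProduct {d : ℕ} (a b : Fin d → ℝ) : dotp a b = a ⬝ᵥ b := rfl

theorem exists_pos_forall_le_dotProduct_add_smul {κ ι : Type*} [Finite κ] [Fintype ι]
    {e : κ → ι → ℝ} {β : κ → ℝ} {y z : ι → ℝ} (hy : ∀ k, β k ≤ e k ⬝ᵥ y)
    (hz : ∀ k, e k ⬝ᵥ y = β k → 0 ≤ e k ⬝ᵥ z) :
    ∃ t > (0 : ℝ), ∀ k, β k ≤ e k ⬝ᵥ (y + t • z) := by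
  have hev : ∀ k, ∀ᶠ t in 𝓝[>] (0 : ℝ), β k ≤ e k ⬝ᵥ (y + t • z) := fun k => by
    simp only [dotProduct_add, dotProduct_smul, smul_eq_mul]
    rcases (hy k).eq_or_lt with htight | hslack
    · filter_upwards [self_mem_nhdsWithin] with t (ht : 0 < t)
      nlinarith [hz k htight.symm]
    · have hcont : Tendsto (fun t : ℝ => e k ⬝ᵥ y + t * e k ⬝ᵥ z) (𝓝[>] 0) (𝓝 (e k ⬝ᵥ y)) := by
        refine tendsto_nhdsWithin_of_tendsto_nhds (Continuous.tendsto' ?_ 0 _ (by simp))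
        fun_prop
      exact (hcont.eventually (lt_mem_nhds hslack)).mono fun _ => le_of_lt
  obtain ⟨t, hk, ht⟩ := ((eventually_all.2 hev).and self_mem_nhdsWithin).exists
  exact ⟨t, ht, hk⟩

lemma bvec_castSucc (d : ℕ) (k : Fin d) : bvec d k.castSucc = Pi.single k 1 := by
  simp [bvec]

lemma bvec_last (d : ℕ) : bvec d (Fin.last d) = -1 := by
  ext; simp [bvec]

lemma mem_simplexCoord_iff {d : ℕ} {y : Fin d → ℝ} :
    y ∈ simplexCoord d ↔ ∀ i, bconst d i ≤ bvec d i ⬝ᵥ y := by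
  simp [simplexCoord, Fin.forall_fin_succ', bvec_castSucc, bvec_last, bconst, one_dotProduct]

theorem exists_pos_add_smul_mem_simplexCoord {d : ℕ} {y z : Fin d → ℝ} (hy : y ∈ simplexCoord d)
    (hz : ∀ i, bvec d i ⬝ᵥ y = bconst d i → 0 ≤ bvec d i ⬝ᵥ z) :
    ∃ t > (0 : ℝ), y + t • z ∈ simplexCoord d := by
  simp only [mem_simplexCoord_iff] at hy ⊢
  exact exists_pos_forall_le_dotProduct_add_smul hy hz

/-- The utilities are modelled as $u^L(y,\ell) = g_\ell \cdot (y - y^*) + c_\ell$ with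
$c_\ell = u^L(y^*,\ell)$ and $c_j = u^L(x,j)$. -/
theorem stmt_12_general (d n : ℕ) (j : Fin n)
    (g : Fin n → Fin d → ℝ) (c : Fin n → ℝ) (V : ℝ)
    (ystar : Fin d → ℝ) (hystar : ystar ∈ simplexCoord d)
    (S : Finset (Fin n)) (hSdef : ∀ ℓ, ℓ ∈ S ↔ ℓ ≠ j ∧ c ℓ = V)
    (B : Finset (Fin (d + 1))) (hBdef : ∀ i, i ∈ B ↔ dotp (bvec d i) ystar = bconst d i)
    (hkey : ∀ y ∈ simplexCoord d, 0 < dotp (g j) (fun i => y i - ystar i) →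
      ∃ ℓ ∈ S, dotp (g ℓ) (fun i => y i - ystar i) + c ℓ < V) :
    ∃ lam : Fin n → ℝ, ∃ mu : Fin (d + 1) → ℝ,
      (∀ ℓ, 0 ≤ lam ℓ) ∧ (∀ ℓ, ℓ ∉ S → lam ℓ = 0) ∧
      (∀ i, 0 ≤ mu i) ∧ (∀ i, i ∉ B → mu i = 0) ∧
      ∀ i', -g j i' = (∑ ℓ, lam ℓ * g ℓ i') + ∑ i, mu i * bvec d i i' := by
  classical
  simp only [dotp_eq_dotProduct] at hBdef hkey
  rcases farkas_alternative (S.disjSum B) (Sum.elim g (bvec d)) (-g j) with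
    ⟨Λ, hΛ, hsupp, hrep⟩ | ⟨z, hz, hzj⟩
  · refine ⟨fun ℓ => Λ (.inl ℓ), fun i => Λ (.inr i), fun ℓ => hΛ _,
      fun ℓ hℓ => hsupp _ (by simpa using hℓ), fun i => hΛ _,
      fun i hi => hsupp _ (by simpa using hi), fun i' => ?_⟩
    simpa [Fintype.sum_sum_type] using congrFun hrep i'
  · obtain ⟨t, ht, hmem⟩ := exists_pos_add_smul_mem_simplexCoord hystar
      fun i hi => hz (.inr i) (by simpa using (hBdef i).2 hi)
    have hstep : (fun i => (ystar + t • z) i - ystar i) = t • z := by ext; simp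
    have hgj : 0 < g j ⬝ᵥ z := by simpa using hzj
    obtain ⟨ℓ, hℓS, hlt⟩ := hkey _ hmem (by rw [hstep, dotProduct_smul]; positivity)
    have hgℓ : 0 ≤ g ℓ ⬝ᵥ z := hz (.inl ℓ) (by simpa using hℓS)
    rw [hstep, dotProduct_smul, smul_eq_mul, ((hSdef ℓ).1 hℓS).2] at hlt
    linarith [mul_nonneg ht.le hgℓ]

/-- Lemma (Farkas application): $-g_j$ lies in the conic hull of
$\{g_\ell : \ell \in S\} \cup \{e_i : i \in B\}$. The utilities are written as
$u^L(y,\ell) = g_\ell \cdot (y - y^*) + c_\ell$ with $c_\ell = u^L(y^*,\ell)$, $c_j = u^L(x,j)$,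
and the key input `hkey` is that $\min_{\ell \in S} u^L(y,\ell) < V$ on $U_j(x)$. -/
theorem stmt_12 (d n : ℕ) (hn : 2 ≤ n) (j : Fin n)
    (g : Fin n → Fin d → ℝ) (c : Fin n → ℝ) (V : ℝ)
    (ystar : Fin d → ℝ) (hystar : ystar ∈ simplexCoord d)
    (S : Finset (Fin n)) (hSdef : ∀ ℓ, ℓ ∈ S ↔ ℓ ≠ j ∧ c ℓ = V)
    (hSne : S.Nonempty)
    (B : Finset (Fin (d + 1))) (hBdef : ∀ i, i ∈ B ↔ dotp (bvec d i) ystar = bconst d i)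
    (hcV : ∀ ℓ, ℓ ≠ j → V ≤ c ℓ)
    (hkey : ∀ y ∈ simplexCoord d, 0 < dotp (g j) (fun i => y i - ystar i) →
      ∃ ℓ ∈ S, dotp (g ℓ) (fun i => y i - ystar i) + c ℓ < V) :
    ∃ lam : Fin n → ℝ, ∃ mu : Fin (d + 1) → ℝ,
      (∀ ℓ, 0 ≤ lam ℓ) ∧ (∀ ℓ, ℓ ∉ S → lam ℓ = 0) ∧
      (∀ i, 0 ≤ mu i) ∧ (∀ i, i ∉ B → mu i = 0) ∧
      ∀ i', -g j i' = (∑ ℓ, lam ℓ * g ℓ i') + ∑ i, mu i * bvec d i i' :=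
  stmt_12_general d n j g c V ystar hystar S hSdef B hBdef hkey
end
end

section
/- (Payoff-inducibility characterization, easy direction plus domination construction.) Let $u^L \in \mathbb{R}^{m \times n}$ and $(\mathbf{x},j)$ with $u^L(\mathbf{x},j) \geq M_{-j} := \max_{\mathbf{y} \in \Delta^{m-1}} \min_{\ell \neq j} u^L(\mathbf{y},\ell)$. Define $\tilde{u}^F(\mathbf{y},\ell) = -u^L(\mathbf{y},\ell)$ for $\ell \neq j$ and $\tilde{u}^F(\mathbf{y},j) = -u^L(\mathbf{y},k) + (u^L(\mathbf{x},j) - u^L(\mathbf{y},j))$ for $k \in \arg\min_{\ell \neq j} u^L(\mathbf{x},\ell)$. Then $(\mathbf{x},j)$ is an SSE of $(u^L,\tilde{u}^F)$. -/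
open Finset

noncomputable section

section InducingPayoff

variable {α ι : Type*} [DecidableEq ι]

/-- The paper's `ũ^F`: off `j` the follower is zero-sum against the leader, and `j` beats the
fallback `k` exactly when the leader gets at most `u x j` from `j`. -/
def inducingPayoff (u : α → ι → ℝ) (x : α) (j k : ι) (y : α) (ℓ : ι) : ℝ :=
  if ℓ = j then -u y k + (u x j - u y j) else -u y ℓ

variable {u : α → ι → ℝ} {x : α} {j k : ι}

theorem inducingPayoff_le_target (hk : ∀ ℓ, ℓ ≠ j → u x k ≤ u x ℓ) (ℓ : ι) :
    inducingPayoff u x j k x ℓ ≤ inducingPayoff u x j k x j := by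
  by_cases hℓ : ℓ = j
  · rw [hℓ]
  · have := hk ℓ hℓ
    simp only [inducingPayoff, hℓ, if_true, if_false]
    linarith

theorem le_of_forall_inducingPayoff_le (hkj : k ≠ j)
    {y : α} (hy : ∃ ℓ', ℓ' ≠ j ∧ u y ℓ' ≤ u x j)
    {ℓ : ι} (hℓ : ∀ ℓ', inducingPayoff u x j k y ℓ' ≤ inducingPayoff u x j k y ℓ) :
    u y ℓ ≤ u x j := by
  by_cases hℓj : ℓ = j
  · subst hℓj
    have := hℓ k
    simp only [inducingPayoff, hkj, if_true, if_false] at this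
    linarith
  · obtain ⟨ℓ', hℓ'j, hℓ'⟩ := hy
    have := hℓ ℓ'
    simp only [inducingPayoff, hℓ'j, hℓj, if_false] at this
    linarith

end InducingPayoff

theorem stmt_14_general (m n : ℕ) (uL : Fin m → Fin n → ℝ)
    (x : Fin m → ℝ) (j : Fin n)
    (hM : ∀ y ∈ simplex m, ∃ ℓ, ℓ ≠ j ∧ util uL y ℓ ≤ util uL x j)
    (k : Fin n) (hkj : k ≠ j) (hk : ∀ ℓ, ℓ ≠ j → util uL x k ≤ util uL x ℓ)
    (v : (Fin m → ℝ) → Fin n → ℝ)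
    (hv : ∀ y ℓ, v y ℓ = if ℓ = j then -util uL y k + (util uL x j - util uL y j)
      else -util uL y ℓ) :
    (∀ ℓ, v x ℓ ≤ v x j) ∧
    ∀ y ∈ simplex m, ∀ ℓ, (∀ k', v y k' ≤ v y ℓ) → util uL y ℓ ≤ util uL x j := by
  obtain rfl : v = inducingPayoff (util uL) x j k := funext₂ hv
  exact ⟨inducingPayoff_le_target hk,
    fun y hy _ hℓ => le_of_forall_inducingPayoff_le hkj (hM y hy) hℓ⟩

/-- Easy case: if $u^L(x,j) \ge M_{-j}$, the constructed matrix induces $(x,j)$ as an SSE. -/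
theorem stmt_14 (m n : ℕ) (hn : 2 ≤ n) (uL : Fin m → Fin n → ℝ)
    (x : Fin m → ℝ) (hx : x ∈ simplex m) (j : Fin n)
    (hM : ∀ y ∈ simplex m, ∃ ℓ, ℓ ≠ j ∧ util uL y ℓ ≤ util uL x j)
    (k : Fin n) (hkj : k ≠ j) (hk : ∀ ℓ, ℓ ≠ j → util uL x k ≤ util uL x ℓ)
    (v : (Fin m → ℝ) → Fin n → ℝ)
    (hv : ∀ y ℓ, v y ℓ = if ℓ = j then -util uL y k + (util uL x j - util uL y j)
      else -util uL y ℓ) :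
    (∀ ℓ, v x ℓ ≤ v x j) ∧
    ∀ y ∈ simplex m, ∀ ℓ, (∀ k', v y k' ≤ v y ℓ) → util uL y ℓ ≤ util uL x j :=
  stmt_14_general m n uL x j hM k hkj hk v hv
end
end

section
/- If $U_j(\mathbf{x}) = \{\mathbf{y} \in \Delta^{m-1} : u^L(\mathbf{y},j) > u^L(\mathbf{x},j)\} = \emptyset$, then the payoff matrix $\tilde{u}^F$ with $\tilde{u}^F(i,j) = 1$ and $\tilde{u}^F(i,\ell) = 0$ for all $i \in [m]$, $\ell \neq j$, induces $(\mathbf{x},j)$ as an SSE of $(u^L,\tilde{u}^F)$; moreover if additionally $u^L(\mathbf{y},j) < u^L(\mathbf{x},j)$ for all $\mathbf{y} \in \Delta^{m-1} \setminus \{\mathbf{x}\}$, then $(\mathbf{x},j)$ is the unique SSE of $(u^L,\tilde{u}^F)$. -/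
/-! Against the follower matrix whose only nonzero column is `j`, column `j` is the follower's
unique best response to every mixed strategy, so the strong Stackelberg equilibria are exactly
the pairs `(y, j)` with `y` maximizing `u^L(·, j)` over the simplex. -/

open Finset

noncomputable section

/-- \`(x, j)\` is a strong Stackelberg equilibrium of the game with leader matrix \`uL\`
and follower matrix \`v\`. -/
def SSE {m n : ℕ} (uL v : Fin m → Fin n → ℝ) (x : Fin m → ℝ) (j : Fin n) : Prop :=
  x ∈ simplex m ∧ (∀ ℓ, util v x ℓ ≤ util v x j) ∧
    ∀ y ∈ simplex m, ∀ ℓ, (∀ k, util v y k ≤ util v y ℓ) → util uL y ℓ ≤ util uL x j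

section

variable {m n : ℕ}

theorem util_of_columns_const {v : Fin m → Fin n → ℝ} {c : Fin n → ℝ}
    (hv : ∀ i ℓ, v i ℓ = c ℓ) {y : Fin m → ℝ} (hy : y ∈ simplex m) (ℓ : Fin n) :
    util v y ℓ = c ℓ := by
  simp only [util, hv, ← Finset.sum_mul, hy.2, one_mul]

variable {v : Fin m → Fin n → ℝ} {j : Fin n} (hv : ∀ i ℓ, v i ℓ = if ℓ = j then 1 else 0)
include hv

theorem isBestResponse_iff_eq_of_indicator_column {y : Fin m → ℝ} (hy : y ∈ simplex m)
    (ℓ : Fin n) : (∀ k, util v y k ≤ util v y ℓ) ↔ ℓ = j := by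
  simp only [util_of_columns_const hv hy]
  constructor
  · intro h
    by_contra hℓ
    exact absurd (h j) (by simp [hℓ])
  · rintro rfl k
    by_cases hk : k = ℓ <;> simp [hk]

theorem sse_iff_of_indicator_column (uL : Fin m → Fin n → ℝ) (y : Fin m → ℝ) (ℓ : Fin n) :
    SSE uL v y ℓ ↔
      y ∈ simplex m ∧ ℓ = j ∧ ∀ z ∈ simplex m, util uL z j ≤ util uL y j := by
  constructor
  · rintro ⟨hy, hbest, hmax⟩
    obtain rfl := (isBestResponse_iff_eq_of_indicator_column hv hy ℓ).1 hbest
    exact ⟨hy, rfl, fun z hz => hmax z hz ℓ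
      ((isBestResponse_iff_eq_of_indicator_column hv hz ℓ).2 rfl)⟩
  · rintro ⟨hy, rfl, hmax⟩
    refine ⟨hy, (isBestResponse_iff_eq_of_indicator_column hv hy ℓ).2 rfl, ?_⟩
    intro z hz k hk
    obtain rfl := (isBestResponse_iff_eq_of_indicator_column hv hz k).1 hk
    exact hmax z hz

end

theorem stmt_16_general (m n : ℕ) (uL : Fin m → Fin n → ℝ)
    (x : Fin m → ℝ) (hx : x ∈ simplex m) (j : Fin n)
    (hU : ∀ y ∈ simplex m, util uL y j ≤ util uL x j)
    (v : Fin m → Fin n → ℝ)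
    (hv : ∀ i ℓ, v i ℓ = if ℓ = j then 1 else 0) :
    SSE uL v x j ∧
    ((∀ y ∈ simplex m, y ≠ x → util uL y j < util uL x j) →
      ∀ y ℓ, SSE uL v y ℓ → y = x ∧ ℓ = j) := by
  refine ⟨(sse_iff_of_indicator_column hv uL x j).2 ⟨hx, rfl, hU⟩, ?_⟩
  intro hstrict y ℓ hsse
  obtain ⟨hy, rfl, hmax⟩ := (sse_iff_of_indicator_column hv uL y ℓ).1 hsse
  refine ⟨?_, rfl⟩
  by_contra hyx
  exact (hmax x hx).not_gt (hstrict y hy hyx)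

/-- If $U_j(x) = \emptyset$, the dominant-column matrix induces $(x,j)$; if moreover the
maximizer of $u^L(\cdot,j)$ is strict, $(x,j)$ is the unique SSE. -/
theorem stmt_16 (m n : ℕ) (hn : 2 ≤ n) (uL : Fin m → Fin n → ℝ)
    (x : Fin m → ℝ) (hx : x ∈ simplex m) (j : Fin n)
    (hU : ∀ y ∈ simplex m, util uL y j ≤ util uL x j)
    (v : Fin m → Fin n → ℝ)
    (hv : ∀ i ℓ, v i ℓ = if ℓ = j then 1 else 0) :
    SSE uL v x j ∧
    ((∀ y ∈ simplex m, y ≠ x → util uL y j < util uL x j) →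
      ∀ y ℓ, SSE uL v y ℓ → y = x ∧ ℓ = j) :=
  stmt_16_general m n uL x hx j hU v hv

end
end

section
/- (Example: strongly inducible can be much worse than payoff-inducible.) Let $u^L = \begin{pmatrix} 1/4 & 1 \\ 0 & 1/3 \\ 1/4 & 2/3 \end{pmatrix}$. For any $\mathbf{y} \in \Delta^2$ and any payoff matrix $\tilde{u}^F \in \mathbb{R}^{3 \times 2}$, the profile $(\mathbf{y},1)$ is not the unique SSE of $(u^L,\tilde{u}^F)$: either $(u^L,\tilde{u}^F)$ has an SSE other than $(\mathbf{y},1)$, or $(\mathbf{y},1)$ is not an SSE at all. -/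
/-!
Against the response `1` the leader always earns at least `1/3`, against the response `0` at
most `1/4`. So if `1` is a best response of the follower anywhere on the simplex, no profile with
response `0` can be optimal for the leader. Otherwise `0` is the follower's only best response
everywhere, and both vertices `e₀` and `e₂` attain the leader's maximum `1/4` against it, giving
two distinct SSEs.
-/

open Finset

noncomputable section

section General

variable {m n : ℕ}

theorem util_le_of_forall_le {u : Fin m → Fin n → ℝ} {y : Fin m → ℝ} (hy : y ∈ simplex m)
    {j : Fin n} {c : ℝ} (hc : ∀ i, u i j ≤ c) : util u y j ≤ c :=
  calc ∑ i, y i * u i j ≤ ∑ i, y i * c :=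
        sum_le_sum fun i _ => mul_le_mul_of_nonneg_left (hc i) (hy.1 i)
    _ = c := by rw [← sum_mul, hy.2, one_mul]

theorem le_util_of_forall_le {u : Fin m → Fin n → ℝ} {y : Fin m → ℝ} (hy : y ∈ simplex m)
    {j : Fin n} {c : ℝ} (hc : ∀ i, c ≤ u i j) : c ≤ util u y j := by
  have := util_le_of_forall_le (u := -u) hy (j := j) (c := -c) fun i => neg_le_neg (hc i)
  simpa [util, sum_neg_distrib] using this

theorem util_single (u : Fin m → Fin n → ℝ) (i : Fin m) (j : Fin n) :
    util u (Pi.single i 1) j = u i j := by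
  simp [util, Pi.single_apply]

theorem SSE_of_forall_lt_of_forall_le {uL v : Fin m → Fin n → ℝ} {x : Fin m → ℝ} {j : Fin n}
    (hunique : ∀ y ∈ simplex m, ∀ ℓ ≠ j, util v y ℓ < util v y j) (hx : x ∈ simplex m)
    (hmax : ∀ y ∈ simplex m, util uL y j ≤ util uL x j) : SSE uL v x j := by
  refine ⟨hx, fun ℓ => ?_, fun y hy ℓ hbest => ?_⟩
  · rcases eq_or_ne ℓ j with rfl | hℓ
    · exact le_rfl
    · exact (hunique x hx ℓ hℓ).le
  · obtain rfl : ℓ = j := by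
      by_contra hℓ
      exact (hbest j).not_gt (hunique y hy ℓ hℓ)
    exact hmax y hy

end General

notation "leaderPayoff" => ![![(1:ℝ)/4, 1], ![0, 1/3], ![1/4, 2/3]]

theorem util_leaderPayoff_zero_le {y : Fin 3 → ℝ} (hy : y ∈ simplex 3) :
    util leaderPayoff y 0 ≤ 1/4 :=
  util_le_of_forall_le hy fun i => by fin_cases i <;> norm_num

theorem one_third_le_util_leaderPayoff_one {y : Fin 3 → ℝ} (hy : y ∈ simplex 3) :
    1/3 ≤ util leaderPayoff y 1 :=
  le_util_of_forall_le hy fun i => by fin_cases i <;> norm_num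

theorem SSE_leaderPayoff_single {v : Fin 3 → Fin 2 → ℝ}
    (hv : ∀ y ∈ simplex 3, util v y 1 < util v y 0) {i : Fin 3} (hi : leaderPayoff i 0 = 1/4) :
    SSE leaderPayoff v (Pi.single i 1) 0 := by
  refine SSE_of_forall_lt_of_forall_le (fun y hy ℓ hℓ => ?_) (single_mem_stdSimplex ℝ i)
    fun y hy => ?_
  · obtain rfl : ℓ = 1 := Fin.eq_one_of_ne_zero ℓ hℓ
    exact hv y hy
  · rw [util_single, hi]
    exact util_leaderPayoff_zero_le hy

/-- Example: no profile of the form $(y, 1)$ can be strongly induced. -/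
theorem stmt_17 (v : Fin 3 → Fin 2 → ℝ) (y : Fin 3 → ℝ) :
    ¬ (SSE ![![(1:ℝ)/4, 1], ![0, 1/3], ![1/4, 2/3]] v y 0 ∧
       ∀ z ℓ, SSE ![![(1:ℝ)/4, 1], ![0, 1/3], ![1/4, 2/3]] v z ℓ → z = y ∧ ℓ = 0) := by
  rintro ⟨⟨hy, -, hopt⟩, huniq⟩
  by_cases h : ∃ z ∈ simplex 3, util v z 0 ≤ util v z 1
  · obtain ⟨z, hz, hle⟩ := h
    have := hopt z hz 1 (Fin.forall_fin_two.2 ⟨hle, le_rfl⟩)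
    linarith [one_third_le_util_leaderPayoff_one hz, util_leaderPayoff_zero_le hy]
  · push Not at h
    have h₀ := (huniq _ _ (SSE_leaderPayoff_single h (i := 0) (by norm_num))).1
    have h₂ := (huniq _ _ (SSE_leaderPayoff_single h (i := 2) (by simp))).1
    simpa using congrFun (h₀.trans h₂.symm) 0
end
end

section
/- (Core step of Theorem on strong inducibility.) Let $u^L \in \mathbb{R}^{m\times n}$ and suppose $(\mathbf{x}^*,j)$ satisfies $u^L(\mathbf{x}^*,j) \geq M$ (maximin), $U_j(\mathbf{x}^*) \neq \emptyset$, and let $\delta > 0$ and $\mathbf{x}$ be a vertex of the polytope $P_\delta = \{\mathbf{y} \in \Delta^{m-1} : u^L(\mathbf{y},j) = u^L(\mathbf{x}^*,j) + \delta\}$, with $\delta$ maximal subject to $P_\delta \neq \emptyset$ under the given constraints. Let $B = \{i : \mathbf{e}_i \cdot \mathbf{x} = \beta_i\}$ (tight simplex boundary constraints at $\mathbf{x}$, nonempty since $\mathbf{x}$ is a vertex of $P_\delta$), $\mathbf{h} = \sum_{i \in B} \mathbf{e}_i$, $k \in \arg\min_{\ell \neq j} u^L(\mathbf{x},\ell)$,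 and $\alpha = (2\max_{i,\ell}|u^L(i,\ell)| + m)/\delta$. Define $\tilde{u}^F(\mathbf{y},\ell) = -u^L(\mathbf{y},\ell)$ for $\ell \neq j$ and $\tilde{u}^F(\mathbf{y},j) = -u^L(\mathbf{y},k) + \alpha(u^L(\mathbf{x},j)-u^L(\mathbf{y},j)) - \mathbf{h}\cdot(\mathbf{y}-\mathbf{x})$. Then $(\mathbf{x},j)$ is the unique SSE of $(u^L,\tilde{u}^F)$. -/
/-!
`j` is a best response at `x` for the constructed follower utility, since `x` lies on all the
facets in `B` and `k` minimises the leader's utility at `x` among the columns `ℓ ≠ j`. Every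
other best-response pair `(y, ℓ)` gives the leader strictly less than `u^L(x, j)`:
* for `ℓ ≠ j` and `y ∈ U_j(x*)`, Lemma M–V provides `ℓ' ≠ j` which the follower weakly
  dislikes compared to `ℓ`, so `u^L(y, ℓ) ≤ u^L(y, ℓ') ≤ u^L(x*, j)`;
* for `ℓ ≠ j` and `y ∉ U_j(x*)`, `u^L(y, j)` is at least `δ` below `u^L(x, j)`, and the
  penalty `α δ = 2C + m` makes `j` so attractive that `ℓ` can only be a best response where
  the leader gets at most `-C`;
* for `ℓ = j`, comparing `j` with `k` gives `h·y ≤ α (u^L(x, j) - u^L(y, j))`, so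
  `u^L(y, j) ≤ u^L(x, j)`, and equality puts `y` in `P_δ` with `h·(y - x) = 0`, i.e. `y = x`.
-/

open Finset

noncomputable section

/-- `(x, j)` is a strong Stackelberg equilibrium of the game with leader matrix `uL` and
a follower utility function `v` (affine in the leader's mixed strategy, hence arising
from a payoff matrix). -/
def SSEf {m n : ℕ} (uL : Fin m → Fin n → ℝ) (v : (Fin m → ℝ) → Fin n → ℝ)
    (x : Fin m → ℝ) (j : Fin n) : Prop :=
  x ∈ simplex m ∧ (∀ ℓ, v x ℓ ≤ v x j) ∧
    ∀ y ∈ simplex m, ∀ ℓ, (∀ k, v y k ≤ v y ℓ) → util uL y ℓ ≤ util uL x j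

def IsBestResponse {m n : ℕ} (v : (Fin m → ℝ) → Fin n → ℝ) (y : Fin m → ℝ) (ℓ : Fin n) :
    Prop :=
  ∀ k, v y k ≤ v y ℓ

section Simplex

variable {m n : ℕ} {y : Fin m → ℝ}

theorem sum_nonneg_of_mem_simplex (hy : y ∈ simplex m) (B : Finset (Fin m)) :
    0 ≤ ∑ i ∈ B, y i :=
  sum_nonneg fun i _ => hy.1 i

theorem sum_le_one_of_mem_simplex (hy : y ∈ simplex m) (B : Finset (Fin m)) :
    ∑ i ∈ B, y i ≤ 1 :=
  hy.2 ▸ sum_le_sum_of_subset_of_nonneg (subset_univ B) fun i _ _ => hy.1 i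

theorem abs_util_le {uL : Fin m → Fin n → ℝ} {C : ℝ} (hC : ∀ i ℓ, |uL i ℓ| ≤ C)
    (hy : y ∈ simplex m) (ℓ : Fin n) : |util uL y ℓ| ≤ C :=
  calc |∑ i, y i * uL i ℓ| ≤ ∑ i, y i * C :=
        (abs_sum_le_sum_abs _ _).trans <| sum_le_sum fun i _ => by
          rw [abs_mul, abs_of_nonneg (hy.1 i)]
          exact mul_le_mul_of_nonneg_left (hC i ℓ) (hy.1 i)
    _ = C := by rw [← sum_mul, hy.2, one_mul]

end Simplex

theorem ssef_and_unique_of_forall_isBestResponse {m n : ℕ} {uL : Fin m → Fin n → ℝ}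
    {v : (Fin m → ℝ) → Fin n → ℝ} {x : Fin m → ℝ} {j : Fin n} (hx : x ∈ simplex m)
    (hxj : IsBestResponse v x j)
    (h : ∀ y ∈ simplex m, ∀ ℓ, IsBestResponse v y ℓ →
      (y = x ∧ ℓ = j) ∨ util uL y ℓ < util uL x j) :
    SSEf uL v x j ∧ ∀ y ℓ, SSEf uL v y ℓ → y = x ∧ ℓ = j := by
  refine ⟨⟨hx, hxj, fun y hy ℓ hyℓ => ?_⟩, fun y ℓ ⟨hy, hyℓ, hopt⟩ => ?_⟩
  · rcases h y hy ℓ hyℓ with ⟨rfl, rfl⟩ | hlt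
    exacts [le_rfl, hlt.le]
  · exact (h y hy ℓ hyℓ).resolve_right (hopt x hx j hxj).not_gt

theorem sum_sub_eq_sum_of_forall_eq_zero {ι M : Type*} [AddCommGroup M] {B : Finset ι}
    {x : ι → M} (hB : ∀ i ∈ B, x i = 0) (y : ι → M) : ∑ i ∈ B, (y i - x i) = ∑ i ∈ B, y i :=
  sum_congr rfl fun i hi => by rw [hB i hi, sub_zero]

/-- The follower utility `ũ^F` of the construction, with `B` the support of `h` and `α` the
penalty coefficient. -/
def inducingUtility {m n : ℕ} (uL : Fin m → Fin n → ℝ) (x : Fin m → ℝ) (j k : Fin n)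
    (B : Finset (Fin m)) (α : ℝ) (y : Fin m → ℝ) (ℓ : Fin n) : ℝ :=
  if ℓ = j then -util uL y k + α * (util uL x j - util uL y j) - ∑ i ∈ B, (y i - x i)
  else -util uL y ℓ

namespace inducingUtility

variable {m n : ℕ} {uL : Fin m → Fin n → ℝ} {x y : Fin m → ℝ} {j k ℓ : Fin n}
  {B : Finset (Fin m)} {α : ℝ}

theorem apply_of_ne (hℓ : ℓ ≠ j) : inducingUtility uL x j k B α y ℓ = -util uL y ℓ :=
  if_neg hℓ

theorem apply_self (hB : ∀ i ∈ B, x i = 0) :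
    inducingUtility uL x j k B α y j =
      -util uL y k + α * (util uL x j - util uL y j) - ∑ i ∈ B, y i := by
  rw [inducingUtility, if_pos rfl, sum_sub_eq_sum_of_forall_eq_zero hB]

theorem isBestResponse_self (hB : ∀ i ∈ B, x i = 0)
    (hk : ∀ ℓ, ℓ ≠ j → util uL x k ≤ util uL x ℓ) :
    IsBestResponse (inducingUtility uL x j k B α) x j := by
  intro ℓ
  obtain rfl | hℓ := eq_or_ne ℓ j
  · exact le_rfl
  rw [apply_of_ne hℓ, apply_self hB, sum_eq_zero hB]
  linarith [hk ℓ hℓ]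

theorem util_le_of_isBestResponse_of_ne {ℓ' : Fin n} (hℓ : ℓ ≠ j) (hℓ' : ℓ' ≠ j)
    (hbr : IsBestResponse (inducingUtility uL x j k B α) y ℓ) :
    util uL y ℓ ≤ util uL y ℓ' := by
  have := hbr ℓ'
  rw [apply_of_ne hℓ, apply_of_ne hℓ'] at this
  linarith

theorem util_le_neg_of_isBestResponse {C δ : ℝ} (hm : 1 ≤ m) (hC : ∀ i ℓ, |uL i ℓ| ≤ C)
    (hα : 0 ≤ α) (hαδ : 2 * C + m ≤ α * δ) (hB : ∀ i ∈ B, x i = 0) (hy : y ∈ simplex m)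
    (hyj : util uL y j + δ ≤ util uL x j) (hℓ : ℓ ≠ j)
    (hbr : IsBestResponse (inducingUtility uL x j k B α) y ℓ) :
    util uL y ℓ ≤ -C := by
  have hj := hbr j
  rw [apply_of_ne hℓ, apply_self hB] at hj
  have hpenalty : α * δ ≤ α * (util uL x j - util uL y j) :=
    mul_le_mul_of_nonneg_left (by linarith) hα
  have hm' : (1 : ℝ) ≤ m := by exact_mod_cast hm
  linarith [le_of_abs_le (abs_util_le hC hy k), sum_le_one_of_mem_simplex hy B]

theorem eq_or_util_lt_of_isBestResponse_self {c : ℝ} (hB : ∀ i ∈ B, x i = 0) (hkj : k ≠ j)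
    (hα : 0 < α) (hxc : util uL x j = c)
    (hvertex : ∀ y ∈ simplex m, util uL y j = c → y ≠ x → 0 < ∑ i ∈ B, (y i - x i))
    (hy : y ∈ simplex m) (hbr : IsBestResponse (inducingUtility uL x j k B α) y j) :
    y = x ∨ util uL y j < util uL x j := by
  have hk := hbr k
  rw [apply_of_ne hkj, apply_self hB] at hk
  have hsum : ∑ i ∈ B, y i ≤ α * (util uL x j - util uL y j) := by linarith
  have hle : util uL y j ≤ util uL x j :=
    sub_nonneg.1 <| nonneg_of_mul_nonneg_right
      ((sum_nonneg_of_mem_simplex hy B).trans hsum) hα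
  refine or_iff_not_imp_left.2 fun hyx => hle.lt_of_ne fun heq => ?_
  have hpos := hvertex y hy (heq.trans hxc) hyx
  rw [sum_sub_eq_sum_of_forall_eq_zero hB] at hpos
  rw [heq, sub_self, mul_zero] at hsum
  linarith

end inducingUtility

theorem stmt_19_general (m n : ℕ) (hm : 1 ≤ m) (uL : Fin m → Fin n → ℝ)
    (xstar : Fin m → ℝ) (hxstar : xstar ∈ simplex m) (j : Fin n)
    -- Lemma M–V: u^L(x*, j) ≥ min_{ℓ ≠ j} u^L(y, ℓ) for y ∈ closure U_j(x*)
    (hMV : ∀ y ∈ closure {z | z ∈ simplex m ∧ util uL xstar j < util uL z j},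
      ∃ ℓ, ℓ ≠ j ∧ util uL y ℓ ≤ util uL xstar j)
    (δ : ℝ) (hδ : 0 < δ)
    -- x is a point of P_δ
    (x : Fin m → ℝ) (hx : x ∈ simplex m)
    (hxP : util uL x j = util uL xstar j + δ)
    -- B: tight simplex boundary constraints at x, nonempty since x is a vertex of P_δ
    (B : Finset (Fin m)) (hB : ∀ i, i ∈ B ↔ x i = 0)
    -- x is a vertex of P_δ: h·(y − x) > 0 for every other point y of P_δ
    (hvertex : ∀ y ∈ simplex m, util uL y j = util uL xstar j + δ → y ≠ x →
      0 < ∑ i ∈ B, (y i - x i))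
    (k : Fin n) (hkj : k ≠ j) (hk : ∀ ℓ, ℓ ≠ j → util uL x k ≤ util uL x ℓ)
    -- C = max_{i,ℓ} |u^L(i,ℓ)| and α = (2C + m)/δ
    (C : ℝ) (hC : IsGreatest {t | ∃ i ℓ, t = |uL i ℓ|} C)
    (α : ℝ) (hα : α = (2 * C + m) / δ)
    (v : (Fin m → ℝ) → Fin n → ℝ)
    (hv : ∀ y ℓ, v y ℓ = if ℓ = j then
        -util uL y k + α * (util uL x j - util uL y j) - ∑ i ∈ B, (y i - x i)
      else -util uL y ℓ) :
    SSEf uL v x j ∧ ∀ y ℓ, SSEf uL v y ℓ → y = x ∧ ℓ = j := by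
  obtain rfl : v = inducingUtility uL x j k B α := funext fun y => funext (hv y)
  have hB0 : ∀ i ∈ B, x i = 0 := fun i => (hB i).1
  have hCbound : ∀ i ℓ, |uL i ℓ| ≤ C := fun i ℓ => hC.2 ⟨i, ℓ, rfl⟩
  have hC0 : 0 ≤ C := by obtain ⟨i, ℓ, rfl⟩ := hC.1; exact abs_nonneg _
  have hαpos : 0 < α := hα ▸ div_pos (by positivity) hδ
  have hαδ : 2 * C + m ≤ α * δ := by rw [hα, div_mul_cancel₀ _ hδ.ne']
  refine ssef_and_unique_of_forall_isBestResponse hx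
    (inducingUtility.isBestResponse_self hB0 hk) fun y hy ℓ hbr => ?_
  obtain rfl | hℓ := eq_or_ne ℓ j
  · exact (inducingUtility.eq_or_util_lt_of_isBestResponse_self hB0 hkj hαpos hxP hvertex hy
      hbr).imp_left (⟨·, rfl⟩)
  right
  by_cases hyU : util uL xstar j < util uL y j
  · obtain ⟨ℓ', hℓ', hℓ'le⟩ := hMV y (subset_closure ⟨hy, hyU⟩)
    calc util uL y ℓ ≤ util uL y ℓ' := inducingUtility.util_le_of_isBestResponse_of_ne hℓ hℓ' hbr
      _ < util uL x j := by linarith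
  · calc util uL y ℓ ≤ -C := inducingUtility.util_le_neg_of_isBestResponse hm hCbound
          hαpos.le hαδ hB0 hy (by linarith) hℓ hbr
      _ ≤ util uL xstar j := neg_le_of_abs_le (abs_util_le hCbound hxstar j)
      _ < util uL x j := by linarith

/-- Core step of the strong inducibility theorem: the constructed matrix strongly
induces `(x, j)`, i.e. `(x, j)` is the unique SSE of the resulting game. -/
theorem stmt_19 (m n : ℕ) (hm : 1 ≤ m) (hn : 2 ≤ n) (uL : Fin m → Fin n → ℝ)
    (xstar : Fin m → ℝ) (hxstar : xstar ∈ simplex m) (j : Fin n)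
    -- u^L(x*, j) ≥ M (maximin)
    (hM : ∀ y ∈ simplex m, ∃ ℓ, util uL y ℓ ≤ util uL xstar j)
    -- U_j(x*) ≠ ∅
    (hU : ∃ y ∈ simplex m, util uL xstar j < util uL y j)
    -- Lemma M–V: u^L(x*, j) ≥ min_{ℓ ≠ j} u^L(y, ℓ) for y ∈ closure U_j(x*)
    (hMV : ∀ y ∈ closure {z | z ∈ simplex m ∧ util uL xstar j < util uL z j},
      ∃ ℓ, ℓ ≠ j ∧ util uL y ℓ ≤ util uL xstar j)
    (δ : ℝ) (hδ : 0 < δ)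
    -- x is a point of P_δ
    (x : Fin m → ℝ) (hx : x ∈ simplex m)
    (hxP : util uL x j = util uL xstar j + δ)
    -- B: tight simplex boundary constraints at x, nonempty since x is a vertex of P_δ
    (B : Finset (Fin m)) (hB : ∀ i, i ∈ B ↔ x i = 0) (hBne : B.Nonempty)
    -- x is a vertex of P_δ: h·(y − x) > 0 for every other point y of P_δ
    (hvertex : ∀ y ∈ simplex m, util uL y j = util uL xstar j + δ → y ≠ x →
      0 < ∑ i ∈ B, (y i - x i))
    (k : Fin n) (hkj : k ≠ j) (hk : ∀ ℓ, ℓ ≠ j → util uL x k ≤ util uL x ℓ)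
    -- C = max_{i,ℓ} |u^L(i,ℓ)| and α = (2C + m)/δ
    (C : ℝ) (hC : IsGreatest {t | ∃ i ℓ, t = |uL i ℓ|} C)
    (α : ℝ) (hα : α = (2 * C + m) / δ)
    (v : (Fin m → ℝ) → Fin n → ℝ)
    (hv : ∀ y ℓ, v y ℓ = if ℓ = j then
        -util uL y k + α * (util uL x j - util uL y j) - ∑ i ∈ B, (y i - x i)
      else -util uL y ℓ) :
    SSEf uL v x j ∧ ∀ y ℓ, SSEf uL v y ℓ → y = x ∧ ℓ = j :=
  stmt_19_general m n hm uL xstar hxstar j hMV δ hδ x hx hxP B hB hvertex k hkj hk C hC α hα v hv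
end
end
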